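/- arXiv:2501.11860 — 4 statements merged into one kernel-verified Lean document; each statement's English description precedes it below -/
import Mathlib

section
/- For all real x > 0, the Gamma function satisfies sqrt(2π) · x^(x+1/2) · e^(−x) · e^(1/(1+12x)) ≤ Γ(x+1) ≤ sqrt(2π) · x^(x+1/2) · e^(−x) · e^(1/(12x)). -/
/-!
Write `Γ(x) = √(2π) x^(x - 1/2) e^(-x) e^(μ(x))` (Binet's function `μ`). Then
`μ(t) - μ(t + 1) = (t + 1/2) log(1 + 1/t) - 1 = ∑_{k ≥ 0} y^(2k+2) / (2k+3)` with `y = 1/(2t+1)`,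
and comparing this series with geometric series traps the step between
`1/(12t+1) - 1/(12(t+1)+1)` and `1/(12t) - 1/(12(t+1))`. Since `μ(x + n) → 0` (Stirling's formula
at the integers, and Wendel's limit from the log-convexity of `Γ` in between), telescoping gives
`1/(12x+1) ≤ μ(x) ≤ 1/(12x)`.
-/

open Real Filter Topology

section Series

variable {y S : ℝ}

lemma hasSum_pow_div_odd_le (hy0 : 0 ≤ y) (hy1 : y < 1)
    (hS : HasSum (fun k : ℕ => y ^ (2 * k + 2) / (2 * k + 3)) S) :
    S ≤ y ^ 2 / (3 * (1 - y ^ 2)) := by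
  have hy2 : y ^ 2 < 1 := by nlinarith
  have hgeom := (hasSum_geometric_of_lt_one (by positivity) hy2).mul_left (y ^ 2 / 3)
  rw [show y ^ 2 / 3 * (1 - y ^ 2)⁻¹ = y ^ 2 / (3 * (1 - y ^ 2)) by field_simp] at hgeom
  refine hasSum_le (fun k => ?_) hS hgeom
  rw [← pow_mul, div_mul_eq_mul_div, ← pow_add, add_comm 2]
  gcongr
  linarith [k.cast_nonneg (α := ℝ)]

/-- Past the first term, the series dominates a geometric series of ratio `5y²/7`, since
`(7/5)^k ≥ 1 + 2k/5`. -/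
lemma le_of_hasSum_pow_div_odd (hy0 : 0 ≤ y) (hy1 : y < 1)
    (hS : HasSum (fun k : ℕ => y ^ (2 * k + 2) / (2 * k + 3)) S) :
    12 * y ^ 2 / ((6 - 5 * y) * (6 + 7 * y)) ≤ S := by
  have hr : 5 * y ^ 2 / 7 < 1 := by nlinarith
  have hgeom := (hasSum_geometric_of_lt_one (by positivity) hr).mul_left (y ^ 4 / 5)
  have htail := (hasSum_nat_add_iff' 1).2 hS
  have hle := hasSum_le (fun k => ?_) hgeom htail
  · norm_num at hle
    have h6 : 0 < 6 - 5 * y := by linarith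
    have h7 : 0 < 7 - 5 * y ^ 2 := by nlinarith
    rw [show y ^ 4 / 5 * (1 - 5 * y ^ 2 / 7)⁻¹ = 7 * y ^ 4 / (5 * (7 - 5 * y ^ 2)) by
      field_simp] at hle
    refine le_trans ?_ (le_sub_iff_add_le'.1 hle)
    rw [div_add_div _ _ (by norm_num) (by positivity),
      div_le_div_iff₀ (by positivity) (by positivity)]
    nlinarith [mul_nonneg hy0 (mul_nonneg (sub_nonneg.2 hy1.le) (mul_nonneg hy0 hy0)),
      mul_nonneg hy0 (sub_nonneg.2 hy1.le)]
  · have hbernoulli := one_add_mul_le_pow (a := (2 / 5 : ℝ)) (by norm_num) k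
    have hcoeff : (5 / 7 : ℝ) ^ k / 5 ≤ 1 / (2 * ↑(k + 1) + 3) := by
      rw [div_le_div_iff₀ (by norm_num) (by positivity)]
      have : (5 / 7 : ℝ) ^ k * (7 / 5) ^ k = 1 := by rw [← mul_pow]; norm_num
      push_cast
      nlinarith [pow_pos (by norm_num : (0 : ℝ) < 5 / 7) k]
    calc y ^ 4 / 5 * (5 * y ^ 2 / 7) ^ k = y ^ (2 * (k + 1) + 2) * ((5 / 7) ^ k / 5) := by ring
      _ ≤ y ^ (2 * (k + 1) + 2) * (1 / (2 * ↑(k + 1) + 3)) := by gcongr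
      _ = _ := by ring

end Series

lemma le_of_sub_add_one_le {f g : ℝ → ℝ} {x : ℝ}
    (hstep : ∀ n : ℕ, f (x + n) - f (x + n + 1) ≤ g (x + n) - g (x + n + 1))
    (hf : Tendsto (fun n : ℕ => f (x + n)) atTop (𝓝 0))
    (hg : Tendsto (fun n : ℕ => g (x + n)) atTop (𝓝 0)) :
    f x ≤ g x := by
  have hanti : Antitone fun n : ℕ => g (x + n) - f (x + n) :=
    antitone_nat_of_succ_le fun n => by
      have := hstep n
      push_cast
      rw [← add_assoc]
      linarith
  have := hanti.le_of_tendsto (by simpa using hg.sub hf) 0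
  simp only [Nat.cast_zero, add_zero] at this
  linarith

lemma tendsto_one_div_add_nat {x a c : ℝ} (ha : 0 < a) :
    Tendsto (fun n : ℕ => 1 / (a * (x + n) + c)) atTop (𝓝 0) :=
  tendsto_const_nhds.div_atTop <| tendsto_atTop_add_const_right _ c <|
    (tendsto_atTop_add_const_left _ x tendsto_natCast_atTop_atTop).const_mul_atTop ha

lemma tendsto_log_one_add_div_nat (θ : ℝ) :
    Tendsto (fun n : ℕ => log (1 + θ / n)) atTop (𝓝 0) := by
  have := ((tendsto_const_div_atTop_nhds_zero_nat θ).const_add 1).log (by norm_num)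
  rwa [add_zero, log_one] at this

lemma log_comp_Gamma_add_one {y : ℝ} (hy : 0 < y) :
    (log ∘ Gamma) (y + 1) = (log ∘ Gamma) y + log y := by
  rw [Function.comp_apply, Gamma_add_one hy.ne', log_mul hy.ne' (Gamma_pos_of_pos hy).ne',
    add_comm, Function.comp_apply]

lemma tendsto_log_Gamma_nat_add_sub {θ : ℝ} (hθ0 : 0 < θ) (hθ1 : θ ≤ 1) :
    Tendsto (fun n : ℕ => log (Gamma (n + θ)) - log (Gamma n) - θ * log n) atTop (𝓝 0) := by
  have hlower : Tendsto (fun n : ℕ => θ * (log ((n + 1 : ℕ) - 1 : ℝ) - log (n + 1 : ℕ)))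
      atTop (𝓝 0) := by
    have := tendsto_log_nat_add_one_sub_log.neg.const_mul θ
    simp only [neg_zero, mul_zero, neg_sub] at this
    refine this.congr fun n => ?_
    push_cast
    ring_nf
  rw [← tendsto_add_atTop_iff_nat 1]
  refine tendsto_of_tendsto_of_tendsto_of_le_of_le' hlower tendsto_const_nhds ?_ ?_
  · filter_upwards [eventually_ge_atTop 1] with n hn
    have := BohrMollerup.f_add_nat_ge convexOn_log_Gamma log_comp_Gamma_add_one
      (n := n + 1) (by omega) hθ0
    simp only [Function.comp_apply] at this
    linarith
  · filter_upwards with n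
    have := BohrMollerup.f_add_nat_le convexOn_log_Gamma log_comp_Gamma_add_one
      (n := n + 1) (by omega) hθ0 hθ1
    simp only [Function.comp_apply] at this
    linarith

noncomputable def binetMu (x : ℝ) : ℝ :=
  log (Gamma x) - (x - 1 / 2) * log x + x - log √(2 * π)

section BinetMu

variable {t x : ℝ}

lemma Gamma_add_one_eq_binetMu (hx : 0 < x) :
    Gamma (x + 1) = √(2 * π) * x ^ (x + 1 / 2) * exp (-x) * exp (binetMu x) := by
  have hΓ := Gamma_pos_of_pos hx
  rw [Gamma_add_one hx.ne', ← exp_log (mul_pos hx hΓ),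
    ← exp_log (show 0 < √(2 * π) by positivity), rpow_def_of_pos hx, ← exp_add, ← exp_add,
    ← exp_add, log_mul hx.ne' hΓ.ne', binetMu]
  ring_nf

lemma binetMu_sub_binetMu_add_one (ht : 0 < t) :
    binetMu t - binetMu (t + 1) = (t + 1 / 2) * log (1 + t⁻¹) - 1 := by
  have hlog : log (1 + t⁻¹) = log (t + 1) - log t := by
    rw [← log_div (by positivity) ht.ne', add_div, div_self ht.ne', one_div]
  rw [binetMu, binetMu, Gamma_add_one ht.ne', log_mul ht.ne' (Gamma_pos_of_pos ht).ne', hlog]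
  ring

lemma hasSum_binetMu_sub_binetMu_add_one (ht : 0 < t) :
    HasSum (fun k : ℕ => (1 / (2 * t + 1)) ^ (2 * k + 2) / (2 * k + 3))
      (binetMu t - binetMu (t + 1)) := by
  have h2t : 2 * t + 1 ≠ 0 := by positivity
  have hlog := (hasSum_log_one_add_inv ht).mul_left (t + 1 / 2)
  rw [← hasSum_nat_add_iff' 1] at hlog
  have hterm (k : ℕ) : (t + 1 / 2) * (2 * (1 / (2 * ((k + 1 : ℕ) : ℝ) + 1)) *
      (1 / (2 * t + 1)) ^ (2 * (k + 1) + 1)) = (1 / (2 * t + 1)) ^ (2 * k + 2) / (2 * k + 3) := by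
    rw [show 2 * (k + 1) + 1 = (2 * k + 2) + 1 by ring, pow_succ]
    push_cast
    field_simp
    ring
  have hfirst : (t + 1 / 2) * (2 * (1 / (2 * ((0 : ℕ) : ℝ) + 1)) *
      (1 / (2 * t + 1)) ^ (2 * 0 + 1)) = 1 := by
    norm_num
    field_simp
  simp only [hterm, Finset.sum_range_one, hfirst] at hlog
  rw [binetMu_sub_binetMu_add_one ht]
  exact hlog

lemma binetMu_sub_binetMu_add_one_le (ht : 0 < t) :
    binetMu t - binetMu (t + 1) ≤ 1 / (12 * t) - 1 / (12 * (t + 1)) := by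
  have hy1 : 1 / (2 * t + 1) < 1 := by rw [div_lt_one (by positivity)]; linarith
  refine (hasSum_pow_div_odd_le (by positivity) hy1
    (hasSum_binetMu_sub_binetMu_add_one ht)).trans_eq ?_
  have : t + 1 ≠ 0 := by positivity
  rw [show 1 - (1 / (2 * t + 1)) ^ 2 = 4 * t * (t + 1) / (2 * t + 1) ^ 2 by field_simp; ring]
  field_simp
  ring

lemma le_binetMu_sub_binetMu_add_one (ht : 0 < t) :
    1 / (12 * t + 1) - 1 / (12 * (t + 1) + 1) ≤ binetMu t - binetMu (t + 1) := by
  have hy1 : 1 / (2 * t + 1) < 1 := by rw [div_lt_one (by positivity)]; linarith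
  refine le_of_eq_of_le ?_ (le_of_hasSum_pow_div_odd (by positivity) hy1
    (hasSum_binetMu_sub_binetMu_add_one ht))
  have : 12 * t + 1 ≠ 0 := by positivity
  have : 12 * (t + 1) + 1 ≠ 0 := by positivity
  rw [show 6 - 5 * (1 / (2 * t + 1)) = (12 * t + 1) / (2 * t + 1) by field_simp; ring,
    show 6 + 7 * (1 / (2 * t + 1)) = (12 * (t + 1) + 1) / (2 * t + 1) by field_simp; ring]
  field_simp
  ring

lemma binetMu_natCast {n : ℕ} (hn : n ≠ 0) :
    binetMu n = log (Stirling.stirlingSeq n) - log √π := by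
  have hn' : (0 : ℝ) < n := by positivity
  have hfact : log (n.factorial : ℝ) = log n + log (Gamma n) := by
    rw [← Gamma_nat_eq_factorial, Gamma_add_one hn'.ne', log_mul hn'.ne' (Gamma_pos_of_pos hn').ne']
  rw [binetMu, Stirling.log_stirlingSeq_formula, hfact, log_div hn'.ne' (exp_ne_zero 1), log_exp,
    log_mul two_ne_zero hn'.ne', sqrt_mul zero_le_two, log_mul (by positivity) (by positivity),
    log_sqrt zero_le_two]
  ring

lemma tendsto_binetMu_natCast : Tendsto (fun n : ℕ => binetMu n) atTop (𝓝 0) := by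
  have h := (Stirling.tendsto_stirlingSeq_sqrt_pi.log (by positivity)).sub_const (log √π)
  rw [sub_self] at h
  refine h.congr' ?_
  filter_upwards [eventually_ne_atTop 0] with n hn
  exact (binetMu_natCast hn).symm

lemma binetMu_natCast_add {n : ℕ} (hn : n ≠ 0) {θ : ℝ} (hθ : 0 ≤ θ) :
    binetMu (n + θ) = binetMu n + (log (Gamma (n + θ)) - log (Gamma n) - θ * log n) + θ
      - (n + θ - 1 / 2) * log (1 + θ / n) := by
  have hn' : (0 : ℝ) < n := by positivity
  have hlog : log (n + θ) = log n + log (1 + θ / n) := by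
    rw [← log_mul hn'.ne' (by positivity)]
    congr 1
    field_simp
  rw [binetMu, binetMu, hlog]
  ring

lemma tendsto_binetMu_natCast_add {θ : ℝ} (hθ0 : 0 < θ) (hθ1 : θ ≤ 1) :
    Tendsto (fun n : ℕ => binetMu (n + θ)) atTop (𝓝 0) := by
  have h := ((tendsto_binetMu_natCast.add (tendsto_log_Gamma_nat_add_sub hθ0 hθ1)).add_const θ).sub
    (((tendsto_mul_log_one_add_div_atTop θ).comp tendsto_natCast_atTop_atTop).add
      ((tendsto_log_one_add_div_nat θ).const_mul (θ - 1 / 2)))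
  rw [zero_add, zero_add, mul_zero, add_zero, sub_self] at h
  refine h.congr' ?_
  filter_upwards [eventually_ne_atTop 0] with n hn
  rw [binetMu_natCast_add hn hθ0.le, Function.comp_apply]
  ring

lemma tendsto_binetMu_add_natCast (hx : 0 < x) :
    Tendsto (fun n : ℕ => binetMu (x + n)) atTop (𝓝 0) := by
  set m := ⌈x⌉₊ - 1
  have hm : (m : ℝ) = ⌈x⌉₊ - 1 := Nat.cast_pred (Nat.ceil_pos.2 hx)
  have h := (tendsto_binetMu_natCast_add (θ := x - m) (by linarith [Nat.ceil_lt_add_one hx.le])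
    (by linarith [Nat.le_ceil x])).comp (tendsto_add_atTop_nat m)
  refine h.congr fun n => ?_
  simp only [Function.comp_apply]
  push_cast
  ring_nf

lemma binetMu_le (hx : 0 < x) : binetMu x ≤ 1 / (12 * x) := by
  refine le_of_sub_add_one_le (g := fun t => 1 / (12 * t))
    (fun n => binetMu_sub_binetMu_add_one_le (by positivity)) (tendsto_binetMu_add_natCast hx) ?_
  simpa using tendsto_one_div_add_nat (x := x) (c := 0) (by norm_num : (0 : ℝ) < 12)

lemma le_binetMu (hx : 0 < x) : 1 / (12 * x + 1) ≤ binetMu x :=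
  le_of_sub_add_one_le (f := fun t => 1 / (12 * t + 1))
    (fun n => le_binetMu_sub_binetMu_add_one (by positivity))
    (tendsto_one_div_add_nat (by norm_num)) (tendsto_binetMu_add_natCast hx)

end BinetMu

theorem stirling_two_sided (x : ℝ) (hx : 0 < x) :
    Real.sqrt (2 * π) * x ^ (x + 1/2) * Real.exp (-x) * Real.exp (1 / (1 + 12 * x))
      ≤ Real.Gamma (x + 1) ∧
    Real.Gamma (x + 1)
      ≤ Real.sqrt (2 * π) * x ^ (x + 1/2) * Real.exp (-x) * Real.exp (1 / (12 * x)) := by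
  rw [Gamma_add_one_eq_binetMu hx, add_comm 1 (12 * x)]
  exact ⟨by gcongr; exact le_binetMu hx, by gcongr; exact binetMu_le hx⟩
end

section
/- For every integer T > 2, the ratio of Gamma values satisfies Γ((T+1)/2) / Γ(T/2) ≤ sqrt(T/(2e)) · (1 − 1/T)^(T/2) / (1 − 2/T)^((T−1)/2). -/
/-!
Let `μ(x) = log Γ(x + 1) - ((x + 1/2) log x - x + log (2π) / 2)` be the remainder in Stirling's
formula (Binet's function). Taking logarithms, the bound says exactly `μ((T-1)/2) ≤ μ((T-2)/2)`,
one half-step of the monotonicity of `μ`.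

The recurrence `μ(x) - μ(x + 1) = (x + 1/2) log (1 + 1/x) - 1 = ∑_{k ≥ 1} q^k / (2k + 1)`,
`q = (2x + 1)⁻²`, lies between `q / 3` and `1 / (12 x (x + 1))`; telescoping it from `n` to
infinity, where `μ(n) = log (stirlingSeq n / √π) → 0`, gives Robbins' bounds
`1 / (12n + 1) ≤ μ(n) ≤ 1 / (12n)`. Legendre's duplication formula expresses `μ` at a half-integer
through `μ` at two integers and one explicit logarithm, so for `T` odd and for `T` even the
half-step becomes a rational inequality in `T`.
-/

open Real Filter Topology

lemma hasSum_mul_log_one_add_inv_sub_one {a : ℝ} (ha : 0 < a) :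
    HasSum (fun k : ℕ => ((1 / (2 * a + 1)) ^ 2) ^ (k + 1) / (2 * ((k : ℝ) + 1) + 1))
      ((a + 1 / 2) * log (1 + a⁻¹) - 1) := by
  have h := (hasSum_log_one_add_inv ha).mul_left (a + 1 / 2)
  rw [← hasSum_nat_add_iff' 1, Finset.sum_range_one] at h
  have h2a : 2 * a + 1 ≠ 0 := by positivity
  refine (congrArg₂ HasSum (funext fun k => ?_) ?_).mp h
  · rw [pow_succ _ (2 * (k + 1)), pow_mul]
    push_cast
    field_simp
  · norm_num
    field_simp

lemma one_div_three_mul_sq_le_mul_log_one_add_inv_sub_one {a : ℝ} (ha : 0 < a) :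
    1 / (3 * (2 * a + 1) ^ 2) ≤ (a + 1 / 2) * log (1 + a⁻¹) - 1 := by
  refine le_trans (le_of_eq ?_)
    (le_hasSum (hasSum_mul_log_one_add_inv_sub_one ha) 0 fun k _ => by positivity)
  norm_num
  ring

lemma mul_log_one_add_inv_sub_one_le {a : ℝ} (ha : 0 < a) :
    (a + 1 / 2) * log (1 + a⁻¹) - 1 ≤ 1 / (12 * a * (a + 1)) := by
  set q := (1 / (2 * a + 1)) ^ 2 with hq
  have hq0 : 0 < q := by positivity
  have h1q : 1 - q = 4 * a * (a + 1) * q := by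
    have h2a : 2 * a + 1 ≠ 0 := by positivity
    rw [hq]
    field_simp
    ring
  have hq1 : q < 1 := by
    have : 0 < 4 * a * (a + 1) * q := by positivity
    linarith
  have hgeo := (hasSum_geometric_of_lt_one hq0.le hq1).mul_left (q / 3)
  refine hasSum_le (fun k => ?_) (hasSum_mul_log_one_add_inv_sub_one ha) hgeo |>.trans_eq ?_
  · calc q ^ (k + 1) / (2 * ((k : ℝ) + 1) + 1) ≤ q ^ (k + 1) / 3 := by
          gcongr
          linarith [k.cast_nonneg (α := ℝ)]
      _ = q / 3 * q ^ k := by ring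
  · have : a + 1 ≠ 0 := by positivity
    rw [h1q]
    field_simp [ha.ne', hq0.ne']
    norm_num

noncomputable def stirlingRemainder (x : ℝ) : ℝ :=
  log (Gamma (x + 1)) - ((x + 1 / 2) * log x - x + log (2 * π) / 2)

lemma stirlingRemainder_sub_stirlingRemainder_add_one {x : ℝ} (hx : 0 < x) :
    stirlingRemainder x - stirlingRemainder (x + 1) = (x + 1 / 2) * log (1 + x⁻¹) - 1 := by
  have hΓ : Gamma (x + 1 + 1) = (x + 1) * Gamma (x + 1) := Gamma_add_one (by positivity)
  have hlog : log (1 + x⁻¹) = log (x + 1) - log x := by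
    rw [← log_div (by positivity) hx.ne']
    congr 1
    field_simp
  rw [stirlingRemainder, stirlingRemainder, hΓ,
    log_mul (by positivity) (Gamma_pos_of_pos (by positivity)).ne', hlog]
  ring

lemma stirlingRemainder_add_stirlingRemainder_add_half {x : ℝ} (hx : 0 < x) :
    stirlingRemainder x + stirlingRemainder (x + 1 / 2) =
      stirlingRemainder (2 * x) + 1 / 2 - x * log (1 + (2 * x)⁻¹) := by
  have hx' : 0 < x + 1 / 2 := by positivity
  have hdup := Gamma_mul_Gamma_add_half (x + 1 / 2)
  rw [show x + 1 / 2 + 1 / 2 = x + 1 by ring, show 2 * (x + 1 / 2) = 2 * x + 1 by ring,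
    show (1 : ℝ) - (2 * x + 1) = -(2 * x) by ring] at hdup
  have hlogdup := congrArg log hdup
  rw [log_mul (Gamma_pos_of_pos hx').ne' (Gamma_pos_of_pos (by positivity)).ne',
    log_mul (by positivity) (sqrt_pos.mpr pi_pos).ne',
    log_mul (Gamma_pos_of_pos (by positivity)).ne' (by positivity),
    log_rpow two_pos, log_sqrt pi_pos.le] at hlogdup
  have hΓ : Gamma (x + 1 / 2 + 1) = (x + 1 / 2) * Gamma (x + 1 / 2) := Gamma_add_one hx'.ne'
  have hlog : log (1 + (2 * x)⁻¹) = log (x + 1 / 2) - log x := by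
    rw [← log_div hx'.ne' hx.ne']
    congr 1
    field_simp
  simp only [stirlingRemainder]
  rw [hΓ, log_mul hx'.ne' (Gamma_pos_of_pos hx').ne', hlog, log_mul two_ne_zero hx.ne',
    log_mul two_ne_zero pi_pos.ne']
  linarith

lemma stirlingRemainder_natCast {n : ℕ} (hn : n ≠ 0) :
    stirlingRemainder n = log (Stirling.stirlingSeq n) - log √π := by
  have hn' : (0 : ℝ) < n := by positivity
  rw [stirlingRemainder, Gamma_nat_eq_factorial, Stirling.log_stirlingSeq_formula,
    log_sqrt pi_pos.le, log_mul two_ne_zero hn'.ne', log_div hn'.ne' (exp_pos 1).ne', log_exp,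
    log_mul two_ne_zero pi_pos.ne']
  ring

lemma tendsto_stirlingRemainder_natCast_add_one :
    Tendsto (fun n : ℕ => stirlingRemainder ((n : ℝ) + 1)) atTop (𝓝 0) := by
  have h := ((continuousAt_log (sqrt_pos.mpr pi_pos).ne').tendsto.comp
    (Stirling.tendsto_stirlingSeq_sqrt_pi.comp (tendsto_add_atTop_nat 1))).sub_const (log √π)
  rw [sub_self] at h
  refine h.congr fun n => ?_
  rw [← Nat.cast_add_one, stirlingRemainder_natCast n.succ_ne_zero]
  rfl

lemma tendsto_one_div_mul_natCast_add_one_add {a : ℝ} (ha : 0 < a) (b : ℝ) :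
    Tendsto (fun n : ℕ => 1 / (a * ((n : ℝ) + 1) + b)) atTop (𝓝 0) :=
  tendsto_const_nhds.div_atTop <| tendsto_atTop_add_const_right _ _ <|
    (tendsto_atTop_add_const_right _ _ tendsto_natCast_atTop_atTop).const_mul_atTop ha

lemma stirlingRemainder_natCast_le {n : ℕ} (hn : n ≠ 0) :
    stirlingRemainder n ≤ 1 / (12 * n) := by
  obtain ⟨k, rfl⟩ := Nat.exists_eq_add_one_of_ne_zero hn
  have hmono : Monotone fun j : ℕ =>
      stirlingRemainder ((j : ℝ) + 1) - 1 / (12 * ((j : ℝ) + 1)) :=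
    monotone_nat_of_le_succ fun j => by
      have hstep := mul_log_one_add_inv_sub_one_le (a := (j : ℝ) + 1) (by positivity)
      rw [← stirlingRemainder_sub_stirlingRemainder_add_one (by positivity)] at hstep
      have : 1 / (12 * ((j : ℝ) + 1) * ((j : ℝ) + 1 + 1)) =
          1 / (12 * ((j : ℝ) + 1)) - 1 / (12 * ((j : ℝ) + 1 + 1)) := by
        field_simp
        ring
      push_cast
      linarith
  have hlim := tendsto_stirlingRemainder_natCast_add_one.sub
    (tendsto_one_div_mul_natCast_add_one_add (by norm_num : (0 : ℝ) < 12) 0)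
  simp only [add_zero, sub_zero] at hlim
  have := hmono.ge_of_tendsto hlim k
  push_cast
  linarith

lemma le_stirlingRemainder_natCast {n : ℕ} (hn : n ≠ 0) :
    1 / (12 * n + 1) ≤ stirlingRemainder n := by
  obtain ⟨k, rfl⟩ := Nat.exists_eq_add_one_of_ne_zero hn
  have hanti : Antitone fun j : ℕ =>
      stirlingRemainder ((j : ℝ) + 1) - 1 / (12 * ((j : ℝ) + 1) + 1) :=
    antitone_nat_of_succ_le fun j => by
      have hstep := one_div_three_mul_sq_le_mul_log_one_add_inv_sub_one (a := (j : ℝ) + 1)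
        (by positivity)
      rw [← stirlingRemainder_sub_stirlingRemainder_add_one (by positivity)] at hstep
      have : 1 / (12 * ((j : ℝ) + 1) + 1) - 1 / (12 * ((j : ℝ) + 1 + 1) + 1) ≤
          1 / (3 * (2 * ((j : ℝ) + 1) + 1) ^ 2) := by
        rw [div_sub_div _ _ (by positivity) (by positivity),
          div_le_div_iff₀ (by positivity) (by positivity)]
        nlinarith [j.cast_nonneg (α := ℝ)]
      push_cast
      linarith
  have hlim := tendsto_stirlingRemainder_natCast_add_one.sub
    (tendsto_one_div_mul_natCast_add_one_add (by norm_num : (0 : ℝ) < 12) 1)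
  rw [sub_zero] at hlim
  have := hanti.le_of_tendsto hlim k
  push_cast
  linarith

lemma stirlingRemainder_natCast_add_one_le_add_half (k : ℕ) :
    stirlingRemainder ((k : ℝ) + 1) ≤ stirlingRemainder ((k : ℝ) + 1 / 2) := by
  have hk : (0 : ℝ) ≤ k := k.cast_nonneg
  have hdup := stirlingRemainder_add_stirlingRemainder_add_half (x := (k : ℝ) + 1 / 2)
    (by positivity)
  rw [show (k : ℝ) + 1 / 2 + 1 / 2 = k + 1 by ring,
    show 2 * ((k : ℝ) + 1 / 2) = 2 * k + 1 by ring] at hdup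
  have hk1 := stirlingRemainder_natCast_le k.succ_ne_zero
  have h2k1 := le_stirlingRemainder_natCast (2 * k).succ_ne_zero
  push_cast at hk1 h2k1
  have hstep := mul_log_one_add_inv_sub_one_le (a := 2 * (k : ℝ) + 1) (by positivity)
  have hlog : (k + 1 / 2) * log (1 + (2 * (k : ℝ) + 1)⁻¹) ≤
      (k + 1 / 2) * ((1 + 1 / (12 * (2 * k + 1) * (2 * k + 1 + 1))) / (2 * k + 1 + 1 / 2)) := by
    gcongr
    rw [le_div_iff₀ (by positivity)]
    linarith
  have hrat : (k + 1 / 2) * ((1 + 1 / (12 * (2 * k + 1) * (2 * k + 1 + 1))) / (2 * k + 1 + 1 / 2))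
      + 2 * (1 / (12 * (k + 1))) - 1 / (12 * (2 * k + 1) + 1) ≤ (1 / 2 : ℝ) := by
    field_simp
    ring_nf
    nlinarith [pow_nonneg hk 2, pow_nonneg hk 3, pow_nonneg hk 4, pow_nonneg hk 5, pow_nonneg hk 6]
  linarith

lemma stirlingRemainder_add_three_halves_le_add_one (k : ℕ) :
    stirlingRemainder ((k : ℝ) + 3 / 2) ≤ stirlingRemainder ((k : ℝ) + 1) := by
  have hk : (0 : ℝ) ≤ k := k.cast_nonneg
  have hdup := stirlingRemainder_add_stirlingRemainder_add_half (x := (k : ℝ) + 3 / 2)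
    (by positivity)
  rw [show (k : ℝ) + 3 / 2 + 1 / 2 = k + 2 by ring,
    show 2 * ((k : ℝ) + 3 / 2) = 2 * k + 3 by ring] at hdup
  have hk1 := le_stirlingRemainder_natCast k.succ_ne_zero
  have hk2 := le_stirlingRemainder_natCast (n := k + 2) (by omega)
  have h2k3 := stirlingRemainder_natCast_le (n := 2 * k + 3) (by omega)
  push_cast at hk1 hk2 h2k3
  have hstep := one_div_three_mul_sq_le_mul_log_one_add_inv_sub_one (a := 2 * (k : ℝ) + 3)
    (by positivity)
  have hlog : (k + 3 / 2) * ((1 + 1 / (3 * (2 * (2 * k + 3) + 1) ^ 2)) / (2 * k + 3 + 1 / 2)) ≤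
      (k + 3 / 2) * log (1 + (2 * (k : ℝ) + 3)⁻¹) := by
    gcongr
    rw [div_le_iff₀ (by positivity)]
    linarith
  have hrat : 1 / (12 * (2 * k + 3)) + 1 / 2 - (k + 3 / 2) *
      ((1 + 1 / (3 * (2 * (2 * k + 3) + 1) ^ 2)) / (2 * k + 3 + 1 / 2))
      - 1 / (12 * (k + 2) + 1) ≤ (1 / (12 * (k + 1) + 1) : ℝ) := by
    field_simp
    ring_nf
    nlinarith [pow_nonneg hk 2, pow_nonneg hk 3, pow_nonneg hk 4, pow_nonneg hk 5, pow_nonneg hk 6]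
  linarith

lemma Gamma_add_one_div_two_div_Gamma_div_two {T : ℝ} (hT : 2 < T) :
    Gamma ((T + 1) / 2) / Gamma (T / 2) =
      √(T / (2 * exp 1)) * (1 - 1 / T) ^ (T / 2) / (1 - 2 / T) ^ ((T - 1) / 2) *
        exp (stirlingRemainder ((T - 1) / 2) - stirlingRemainder ((T - 2) / 2)) := by
  have hT0 : 0 < T := by linarith
  have hT1 : 0 < T - 1 := by linarith
  have hT2 : 0 < T - 2 := by linarith
  have hp : 0 < 1 - 1 / T := by rw [sub_pos, div_lt_one hT0]; linarith
  have hq : 0 < 1 - 2 / T := by rw [sub_pos, div_lt_one hT0]; linarith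
  have hΓ1 : 0 < Gamma ((T + 1) / 2) := Gamma_pos_of_pos (by positivity)
  have hΓ2 : 0 < Gamma (T / 2) := Gamma_pos_of_pos (by positivity)
  have hlogΓ1 : log (Gamma ((T + 1) / 2)) = stirlingRemainder ((T - 1) / 2) +
      T / 2 * log ((T - 1) / 2) - (T - 1) / 2 + log (2 * π) / 2 := by
    rw [stirlingRemainder, show (T - 1) / 2 + 1 = (T + 1) / 2 by ring]
    ring
  have hlogΓ2 : log (Gamma (T / 2)) = stirlingRemainder ((T - 2) / 2) +
      (T - 1) / 2 * log ((T - 2) / 2) - (T - 2) / 2 + log (2 * π) / 2 := by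
    rw [stirlingRemainder, show (T - 2) / 2 + 1 = T / 2 by ring]
    ring
  have hlogp : log (1 - 1 / T) = log (T - 1) - log T := by
    rw [← log_div hT1.ne' hT0.ne']
    congr 1
    field_simp
  have hlogq : log (1 - 2 / T) = log (T - 2) - log T := by
    rw [← log_div hT2.ne' hT0.ne']
    congr 1
    field_simp
  refine log_injOn_pos (Set.mem_Ioi.2 (div_pos hΓ1 hΓ2)) (Set.mem_Ioi.2 (by positivity)) ?_
  rw [log_div hΓ1.ne' hΓ2.ne', hlogΓ1, hlogΓ2, log_mul (by positivity) (exp_pos _).ne',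
    log_div (by positivity) (rpow_pos_of_pos hq _).ne',
    log_mul (sqrt_pos.2 (by positivity)).ne' (rpow_pos_of_pos hp _).ne',
    log_sqrt (by positivity), log_rpow hp, log_rpow hq, log_exp, hlogp, hlogq,
    log_div hT0.ne' (by positivity), log_mul two_ne_zero (exp_pos 1).ne', log_exp,
    log_div hT1.ne' two_ne_zero, log_div hT2.ne' two_ne_zero]
  ring

lemma Gamma_add_one_div_two_div_Gamma_div_two_le {T : ℝ} (hT : 2 < T)
    (h : stirlingRemainder ((T - 1) / 2) ≤ stirlingRemainder ((T - 2) / 2)) :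
    Gamma ((T + 1) / 2) / Gamma (T / 2) ≤
      √(T / (2 * exp 1)) * (1 - 1 / T) ^ (T / 2) / (1 - 2 / T) ^ ((T - 1) / 2) := by
  have hpos : 0 < Gamma ((T + 1) / 2) / Gamma (T / 2) :=
    div_pos (Gamma_pos_of_pos (by linarith)) (Gamma_pos_of_pos (by linarith))
  rw [Gamma_add_one_div_two_div_Gamma_div_two hT] at hpos ⊢
  exact mul_le_of_le_one_right (pos_of_mul_pos_left hpos (exp_pos _).le).le
    (exp_le_one_iff.2 (sub_nonpos.2 h))

theorem gamma_ratio_bound (T : ℤ) (hT : 2 < T) :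
    Real.Gamma (((T : ℝ) + 1) / 2) / Real.Gamma ((T : ℝ) / 2)
      ≤ Real.sqrt ((T : ℝ) / (2 * Real.exp 1)) *
        (1 - 1 / (T : ℝ)) ^ ((T : ℝ) / 2) / (1 - 2 / (T : ℝ)) ^ (((T : ℝ) - 1) / 2) := by
  refine Gamma_add_one_div_two_div_Gamma_div_two_le (by exact_mod_cast hT) ?_
  obtain ⟨n, rfl⟩ : ∃ n : ℕ, T = n + 3 := ⟨(T - 3).toNat, by omega⟩
  obtain ⟨k, rfl | rfl⟩ := Nat.even_or_odd' n
  · convert stirlingRemainder_natCast_add_one_le_add_half k using 2 <;> push_cast <;> ring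
  · convert stirlingRemainder_add_three_halves_le_add_one k using 2 <;> push_cast <;> ring
end

section
/- Define f(T) = T·(1 − e^(−1/2)·(1 − 1/T)^(T/2)·(1 − 2/T)^(−(T−1)/2)) for integers T ≥ 3. Then f(T) = 1/4 + O(1/T) as T → ∞; i.e., there exist constants C > 0 and T₀ such that |f(T) − 1/4| ≤ C/T for all T ≥ T₀. -/
/-!
Writing the product as `exp L(t)` with
`L(t) = -1/2 + (t/2) log (1 - 1/t) - ((t-1)/2) log (1 - 2/t)`, the second-order Taylor
expansions of the two logarithms give `L(t) = -1/(4t) + O(1/t²)`, with cubic remainders bounded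
explicitly. Then `1 - exp L = -L + O(L²) = 1/(4t) + O(1/t²)`, and multiplying by `t` gives
`f(t) = 1/4 + O(1/t)`; for `t ≥ 5` the constant `19` works.
-/

open Real

noncomputable def fExponent (t : ℝ) : ℝ :=
  -1 / 2 + t / 2 * log (1 - 1 / t) - (t - 1) / 2 * log (1 - 2 / t)

lemma abs_log_one_sub_add_le {x : ℝ} (h0 : 0 ≤ x) (h1 : x < 1) :
    |log (1 - x) + x + x ^ 2 / 2| ≤ x ^ 3 / (1 - x) := by
  have h := abs_log_sub_add_sum_range_le (by rwa [abs_of_nonneg h0]) 2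
  simp only [Finset.sum_range_succ, Finset.sum_range_zero, abs_of_nonneg h0] at h
  convert h using 2; ring

lemma abs_log_one_sub_add_le_two_mul_pow_three {x : ℝ} (h0 : 0 ≤ x) (h1 : x ≤ 1 / 2) :
    |log (1 - x) + x + x ^ 2 / 2| ≤ 2 * x ^ 3 := by
  refine (abs_log_one_sub_add_le h0 (by linarith)).trans ?_
  rw [div_le_iff₀ (by linarith)]
  nlinarith [pow_nonneg h0 3]

lemma exp_mul_rpow_eq_exp_fExponent {t : ℝ} (ht : 2 < t) :
    exp (-1 / 2) * (1 - 1 / t) ^ (t / 2) * (1 - 2 / t) ^ (-((t - 1) / 2)) =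
      exp (fExponent t) := by
  have h2 : 2 / t < 1 := (div_lt_one (by linarith)).2 ht
  have h1 : 1 / t < 2 / t := div_lt_div_of_pos_right one_lt_two (by linarith)
  rw [rpow_def_of_pos (by linarith), rpow_def_of_pos (by linarith), ← exp_add, ← exp_add,
    fExponent]
  ring_nf

lemma abs_fExponent_add_le {t : ℝ} (ht : 4 ≤ t) :
    |fExponent t + 1 / (4 * t)| ≤ 10 / t ^ 2 := by
  have ht0 : 0 < t := by linarith
  have he1 := abs_log_one_sub_add_le_two_mul_pow_three (x := 1 / t) (by positivity)
    (by rw [div_le_div_iff₀ ht0 two_pos]; linarith)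
  have he2 := abs_log_one_sub_add_le_two_mul_pow_three (x := 2 / t) (by positivity)
    (by rw [div_le_div_iff₀ ht0 two_pos]; linarith)
  set e1 := log (1 - 1 / t) + 1 / t + (1 / t) ^ 2 / 2
  set e2 := log (1 - 2 / t) + 2 / t + (2 / t) ^ 2 / 2
  -- The terms of order `1` and `1/t` cancel exactly, leaving the cubic Taylor remainders.
  have hsplit : fExponent t + 1 / (4 * t) = t / 2 * e1 - (t - 1) / 2 * e2 - 1 / t ^ 2 := by
    simp only [fExponent, e1, e2]
    field_simp
    ring
  have hb1 : |t / 2 * e1| ≤ 1 / t ^ 2 := by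
    rw [abs_mul, abs_of_pos (by positivity)]
    calc t / 2 * |e1| ≤ t / 2 * (2 * (1 / t) ^ 3) := by gcongr
      _ = 1 / t ^ 2 := by field_simp
  have hb2 : |(t - 1) / 2 * e2| ≤ 8 / t ^ 2 := by
    rw [abs_mul, abs_of_pos (by linarith)]
    calc (t - 1) / 2 * |e2| ≤ t / 2 * (2 * (2 / t) ^ 3) := by gcongr; linarith
      _ = 8 / t ^ 2 := by field_simp; ring
  have hb3 : |1 / t ^ 2| = 1 / t ^ 2 := abs_of_pos (by positivity)
  rw [hsplit]
  calc |t / 2 * e1 - (t - 1) / 2 * e2 - 1 / t ^ 2|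
      ≤ |t / 2 * e1| + |(t - 1) / 2 * e2| + |1 / t ^ 2| :=
        (abs_sub _ _).trans (add_le_add_left (abs_sub _ _) _)
    _ ≤ 1 / t ^ 2 + 8 / t ^ 2 + 1 / t ^ 2 := by linarith
    _ = 10 / t ^ 2 := by ring

lemma abs_one_sub_exp_sub_le {L : ℝ} (hL : |L| ≤ 1) (c : ℝ) :
    |1 - exp L - c| ≤ L ^ 2 + |L + c| := by
  calc |1 - exp L - c| = |-(exp L - 1 - L) - (L + c)| := by ring_nf
    _ ≤ |exp L - 1 - L| + |L + c| := by
        simpa only [abs_neg] using abs_sub (-(exp L - 1 - L)) (L + c)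
    _ ≤ L ^ 2 + |L + c| := by gcongr; exact abs_exp_sub_one_sub_id_le hL

lemma abs_mul_one_sub_exp_fExponent_sub_le {t : ℝ} (ht : 5 ≤ t) :
    |t * (1 - exp (fExponent t)) - 1 / 4| ≤ 19 / t := by
  have ht0 : 0 < t := by linarith
  have hrem := abs_fExponent_add_le (by linarith : (4 : ℝ) ≤ t)
  have hsmall : 10 / t ^ 2 ≤ 2 / t := by
    rw [div_le_div_iff₀ (by positivity) ht0]; nlinarith
  have hquarter : 1 / (4 * t) ≤ 1 / t := by gcongr; linarith
  have hL : |fExponent t| ≤ 3 / t := by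
    calc |fExponent t| ≤ |fExponent t + 1 / (4 * t)| + |1 / (4 * t)| := by
          simpa using abs_sub (fExponent t + 1 / (4 * t)) (1 / (4 * t))
      _ ≤ 2 / t + 1 / t := by rw [abs_of_pos (a := 1 / (4 * t)) (by positivity)]; linarith
      _ = 3 / t := by ring
  have hL1 : |fExponent t| ≤ 1 := hL.trans (by rw [div_le_one ht0]; linarith)
  have hsq : fExponent t ^ 2 ≤ (3 / t) ^ 2 := by
    rw [← sq_abs]; exact pow_le_pow_left₀ (abs_nonneg _) hL 2
  have hfactor : t * (1 - exp (fExponent t)) - 1 / 4 =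
      t * (1 - exp (fExponent t) - 1 / (4 * t)) := by field_simp
  rw [hfactor, abs_mul, abs_of_pos ht0]
  calc t * |1 - exp (fExponent t) - 1 / (4 * t)|
      ≤ t * ((3 / t) ^ 2 + 10 / t ^ 2) := by
        gcongr; exact (abs_one_sub_exp_sub_le hL1 _).trans (by linarith)
    _ = 19 / t := by field_simp; ring

theorem f_asymptotic :
    ∃ C > (0 : ℝ), ∃ T₀ : ℕ, ∀ T : ℕ, T₀ ≤ T → 3 ≤ T →
      |(T : ℝ) * (1 - Real.exp (-(1:ℝ)/2) * (1 - 1 / (T : ℝ)) ^ ((T : ℝ) / 2) *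
          (1 - 2 / (T : ℝ)) ^ (-(((T : ℝ) - 1) / 2))) - 1/4| ≤ C / (T : ℝ) := by
  refine ⟨19, by norm_num, 5, fun T hT _ => ?_⟩
  have hT5 : (5 : ℝ) ≤ T := by exact_mod_cast hT
  rw [exp_mul_rpow_eq_exp_fExponent (by linarith)]
  exact abs_mul_one_sub_exp_fExponent_sub_le hT5
end

section
/- For all integers T ≥ 3, the quantity f(T) = T·(1 − e^{−1/2}·(1 − 1/T)^{T/2}·(1 − 2/T)^{−(T−1)/2}) is nonnegative. -/
/-!
After taking logarithms the claim reads `T log (1 - 1/T) - (T - 1) log (1 - 2/T) ≤ 1`, which for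
`m = T - 2` is `(m + 1) log (1 + 1/m) - log (1 + 1/(m + 1)) ≤ 1`. Both logarithms are estimated
with the series `log (1 + 1/a) = 2 ∑ y^(2k+1)/(2k+1)`, `y = 1/(2a+1)`: from below by its first
term, from above by its first term plus a geometric tail. What remains is the rational inequality
`12 m² - 8 m - 3 ≥ 0`.
-/

open Real

theorem two_div_le_log_one_add_inv {a : ℝ} (ha : 0 < a) :
    2 / (2 * a + 1) ≤ log (1 + a⁻¹) := by
  simpa [div_eq_mul_inv] using
    le_hasSum (hasSum_log_one_add_inv ha) 0 fun k _ ↦ by positivity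

theorem log_one_add_inv_le {a : ℝ} (ha : 0 < a) :
    log (1 + a⁻¹) ≤ 2 / (2 * a + 1) + 1 / (6 * a * (a + 1) * (2 * a + 1)) := by
  have htail := (hasSum_nat_add_iff' 1).mpr (hasSum_log_one_add_inv ha)
  simp only [Finset.sum_range_one, Nat.cast_zero, Nat.cast_add, Nat.cast_one] at htail
  set y := 1 / (2 * a + 1) with hy
  have hy0 : 0 < y := by positivity
  have hy1 : 1 - y ^ 2 = 4 * a * (a + 1) * y ^ 2 := by rw [hy]; field_simp; ring
  have hgeo :
      HasSum (fun k : ℕ ↦ 2 / 3 * y ^ 3 * (y ^ 2) ^ k) (2 / 3 * y ^ 3 * (1 - y ^ 2)⁻¹) := by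
    refine (hasSum_geometric_of_lt_one (by positivity) ?_).mul_left _
    linarith [show 0 < 1 - y ^ 2 by rw [hy1]; positivity]
  have hterm (k : ℕ) :
      2 * (1 / (2 * ((k : ℝ) + 1) + 1)) * y ^ (2 * (k + 1) + 1) ≤
        2 / 3 * y ^ 3 * (y ^ 2) ^ k := by
    rw [show 2 * (k + 1) + 1 = 3 + 2 * k by ring, pow_add, pow_mul]
    have : 1 / (2 * ((k : ℝ) + 1) + 1) ≤ 1 / 3 := by
      gcongr; linarith [k.cast_nonneg (α := ℝ)]
    have : 0 < y ^ 3 * (y ^ 2) ^ k := by positivity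
    nlinarith
  have hle := hasSum_le hterm htail hgeo
  have hsum : 2 / 3 * y ^ 3 * (1 - y ^ 2)⁻¹ = 1 / (6 * a * (a + 1) * (2 * a + 1)) := by
    rw [hy1, hy]; field_simp; ring
  have hfirst : 2 * (1 / (2 * 0 + 1)) * y ^ (2 * 0 + 1) = 2 / (2 * a + 1) := by
    rw [hy]; ring
  linarith

theorem add_one_mul_log_one_add_inv_sub_log_le {m : ℝ} (hm : 1 ≤ m) :
    (m + 1) * log (1 + m⁻¹) - log (1 + (m + 1)⁻¹) ≤ 1 := by
  have hupper := log_one_add_inv_le (a := m) (by linarith)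
  have hlower := two_div_le_log_one_add_inv (a := m + 1) (by linarith)
  have hbound : (m + 1) * (2 / (2 * m + 1) + 1 / (6 * m * (m + 1) * (2 * m + 1)))
      - 2 / (2 * (m + 1) + 1) ≤ 1 := by
    rw [← sub_nonneg]
    have e : 1 - ((m + 1) * (2 / (2 * m + 1) + 1 / (6 * m * (m + 1) * (2 * m + 1)))
        - 2 / (2 * (m + 1) + 1)) =
          (12 * m ^ 2 - 8 * m - 3) / (6 * m * (2 * m + 1) * (2 * m + 3)) := by
      field_simp; ring
    rw [e]
    exact div_nonneg (by nlinarith) (by positivity)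
  linarith [mul_le_mul_of_nonneg_left hupper (by linarith : (0 : ℝ) ≤ m + 1)]

theorem mul_log_one_sub_one_div_sub_mul_log_one_sub_two_div_le {t : ℝ} (ht : 3 ≤ t) :
    t * log (1 - 1 / t) - (t - 1) * log (1 - 2 / t) ≤ 1 := by
  obtain ⟨m, rfl⟩ : ∃ m, t = m + 2 := ⟨t - 2, by ring⟩
  have hm : 1 ≤ m := by linarith
  have h1 : 1 - 1 / (m + 2) = (1 + (m + 1)⁻¹)⁻¹ := by field_simp; ring
  have h2 : 1 - 2 / (m + 2) = ((1 + m⁻¹) * (1 + (m + 1)⁻¹))⁻¹ := by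
    have : m ≠ 0 := by positivity
    field_simp; ring
  rw [h1, h2, log_inv, log_inv, log_mul (by positivity) (by positivity)]
  linarith [add_one_mul_log_one_add_inv_sub_log_le hm]

theorem f_nonneg (T : ℕ) (hT : 3 ≤ T) :
    0 ≤ (T : ℝ) * (1 - Real.exp (-(1:ℝ)/2) * (1 - 1 / (T : ℝ)) ^ ((T : ℝ) / 2) *
          (1 - 2 / (T : ℝ)) ^ (-(((T : ℝ) - 1) / 2))) := by
  have hT3 : (3 : ℝ) ≤ T := by exact_mod_cast hT
  have h1 : 0 < 1 - 1 / (T : ℝ) := sub_pos.2 ((div_lt_one (by positivity)).2 (by linarith))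
  have h2 : 0 < 1 - 2 / (T : ℝ) := sub_pos.2 ((div_lt_one (by positivity)).2 (by linarith))
  refine mul_nonneg (Nat.cast_nonneg T) (sub_nonneg.2 ?_)
  rw [rpow_def_of_pos h1, rpow_def_of_pos h2, ← exp_add, ← exp_add, exp_le_one_iff]
  linarith [mul_log_one_sub_one_div_sub_mul_log_one_sub_two_div_le hT3]
end
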